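/- For every natural number n ≥ 1, the principal value integral ∫_{-∞}^{∞} sin(πα) / (α·(1−α)(2−α)⋯(n−α)) dα equals π·2^n / n!. -/

import Mathlib

/-!
Write `f n` for the integrand. Since `sin (π (n + 1 - α)) = (-1) ^ n sin (π α)` and
`∏ j ∈ [1, n], (j - α)` changes by the same sign under `α ↦ n + 1 - α`, the partial fraction
`1 / (α (n + 1 - α)) = (1 / α + 1 / (n + 1 - α)) / (n + 1)` gives
`f (n + 1) α = (f n α + f n (n + 1 - α)) / (n + 1)`,
hence `∫ f (n + 1) = 2 / (n + 1) * ∫ f n`.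
This also carries integrability from `f 1`, which is `O(1 / (1 + α²))`, to every `f n`.

For the base case, `f 1 α / (2π)` is the Fourier transform of the cosine pulse
`cos (π t) 𝟙[-1/2, 1/2]` at `α - 1/2`, so Fourier inversion at `0` gives `∫ f 1 = 2π`.
-/

open Real Finset MeasureTheory

open FourierTransform

noncomputable def sinDivPoly (n : ℕ) (α : ℝ) : ℝ :=
  sin (π * α) / (α * ∏ j ∈ Icc 1 n, ((j : ℝ) - α))

lemma prod_Icc_natCast_sub_reflect {R : Type*} [CommRing R] (n : ℕ) (x : R) :
    ∏ j ∈ Icc 1 n, ((j : R) - (n + 1 - x)) = (-1) ^ n * ∏ j ∈ Icc 1 n, ((j : R) - x) := by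
  calc ∏ j ∈ Icc 1 n, ((j : R) - (n + 1 - x))
      = ∏ j ∈ Icc 1 n, (-1 * (((n + 1 - j : ℕ) : R) - x)) := by
        refine prod_congr rfl fun j hj => ?_
        rw [Nat.cast_sub (by grind)]
        push_cast
        ring
    _ = (-1) ^ n * ∏ j ∈ Icc 1 n, (((n + 1 - j : ℕ) : R) - x) := by
        rw [prod_mul_distrib, prod_const, Nat.card_Icc, Nat.add_sub_cancel]
    _ = (-1) ^ n * ∏ j ∈ Icc 1 n, ((j : R) - x) := by
        congr 1
        exact prod_nbij' (fun j => n + 1 - j) (fun j => n + 1 - j) (by grind)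
          (by grind) (by grind) (by grind) (fun _ _ => rfl)

-- At integers `α` both sides vanish (`sin (π α) = 0`), so the identity holds everywhere.
lemma sinDivPoly_succ (n : ℕ) (α : ℝ) :
    sinDivPoly (n + 1) α = (sinDivPoly n α + sinDivPoly n (n + 1 - α)) / (n + 1) := by
  have hsin : sin (π * (n + 1 - α)) = (-1) ^ n * sin (π * α) := by
    rw [mul_sub, mul_comm π, ← Nat.cast_succ, sin_nat_mul_pi_sub, pow_succ]
    ring
  by_cases hs : sin (π * α) = 0
  · simp [sinDivPoly, hs, hsin]
  have hα : ∀ k : ℤ, α ≠ k := fun k h => hs (by rw [h, mul_comm]; exact sin_int_mul_pi k)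
  have hP : ∏ j ∈ Icc 1 n, ((j : ℝ) - α) ≠ 0 :=
    prod_ne_zero_iff.2 fun j _ => sub_ne_zero.2 (by exact_mod_cast (hα j).symm)
  have h0 : α ≠ 0 := by exact_mod_cast hα 0
  have hn : (n + 1 : ℝ) - α ≠ 0 := sub_ne_zero.2 (by exact_mod_cast (hα (n + 1)).symm)
  rw [sinDivPoly, sinDivPoly, sinDivPoly, prod_Icc_succ_top (by omega),
    prod_Icc_natCast_sub_reflect, hsin]
  push_cast
  field_simp
  ring

lemma abs_sin_pi_mul_le (k : ℤ) (α : ℝ) : |sin (π * α)| ≤ π * |α - k| :=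
  calc |sin (π * α)| = |sin (π * α - k * π)| := by
        rw [sin_sub_int_mul_pi, abs_mul, abs_neg_one_zpow, one_mul]
    _ ≤ |π * α - k * π| := abs_sin_le_abs
    _ = π * |α - k| := by rw [← mul_comm π, ← mul_sub, abs_mul, abs_of_pos pi_pos]

lemma abs_sinDivPoly_one_le (α : ℝ) :
    |sinDivPoly 1 α| ≤ (1 + 3 * π) * (1 + α ^ 2)⁻¹ := by
  have hf : sinDivPoly 1 α = sin (π * α) / (α * (1 - α)) := by simp [sinDivPoly]
  rw [← div_eq_mul_inv, le_div_iff₀ (by positivity), hf]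
  by_cases hD : α * (1 - α) = 0
  · rw [hD, div_zero, abs_zero, zero_mul]
    positivity
  obtain ⟨hα, hα'⟩ := mul_ne_zero_iff.1 hD
  set F := |sin (π * α) / (α * (1 - α))|
  have hF : F * |α| * |1 - α| = |sin (π * α)| := by
    rw [mul_assoc, ← abs_mul, ← abs_mul, div_mul_cancel₀ _ hD]
  have h0 : F * |1 - α| ≤ π := by
    refine le_of_mul_le_mul_right ?_ (abs_pos.2 hα)
    rw [mul_right_comm, hF]
    simpa using abs_sin_pi_mul_le 0 α
  have h1 : F * |α| ≤ π := by
    refine le_of_mul_le_mul_right ?_ (abs_pos.2 hα')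
    rw [hF, abs_sub_comm]
    simpa using abs_sin_pi_mul_le 1 α
  have hsum : 1 ≤ |α| + |1 - α| := by simpa using abs_add_le α (1 - α)
  have hle : |α| ≤ |1 - α| + 1 := by simpa [abs_sub_comm] using abs_sub_le α 1 0
  calc F * (1 + α ^ 2) = F + F * |α| * |α| := by rw [← sq_abs]; ring
    _ ≤ F * (|α| + |1 - α|) + F * |α| * (|1 - α| + 1) := by
        gcongr
        exact le_mul_of_one_le_right (abs_nonneg _) hsum
    _ = F * |α| + F * |1 - α| + F * |α| * |1 - α| + F * |α| := by ring
    _ ≤ π + π + 1 + π := by gcongr; rw [hF]; exact abs_sin_le_one _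
    _ = 1 + 3 * π := by ring

lemma integrable_sinDivPoly_one : Integrable (sinDivPoly 1) := by
  refine (integrable_inv_one_add_sq.const_mul (1 + 3 * π)).mono ?_ (ae_of_all _ fun α => ?_)
  · refine Measurable.aestronglyMeasurable ?_
    unfold sinDivPoly
    fun_prop
  · rw [Real.norm_eq_abs, Real.norm_of_nonneg (by positivity)]
    exact abs_sinDivPoly_one_le α

lemma integrable_sinDivPoly {n : ℕ} (hn : 1 ≤ n) : Integrable (sinDivPoly n) := by
  induction n, hn using Nat.le_induction with
  | base => exact integrable_sinDivPoly_one
  | succ n _ ih =>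
    rw [funext (sinDivPoly_succ n)]
    exact (ih.add (ih.comp_sub_left _)).div_const _

lemma integral_sinDivPoly_succ {n : ℕ} (h : Integrable (sinDivPoly n)) :
    ∫ α, sinDivPoly (n + 1) α = 2 / (n + 1) * ∫ α, sinDivPoly n α := by
  simp_rw [sinDivPoly_succ n]
  rw [integral_div, integral_add h (h.comp_sub_left _), integral_sub_left_eq_self]
  ring

lemma integral_exp_two_pi_mul_I_mul_eq_sinc (b : ℝ) :
    ∫ t in (-(1 / 2) : ℝ)..1 / 2, Complex.exp (2 * π * b * Complex.I * t) = sinc (π * b) := by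
  rcases eq_or_ne b 0 with rfl | hb
  · norm_num
  have hc : (2 * π * b * Complex.I : ℂ) ≠ 0 := by simp [pi_ne_zero, hb]
  rw [integral_exp_mul_complex hc, sinc_of_ne_zero (by positivity)]
  push_cast
  rw [Complex.sin]
  field_simp
  ring_nf
  simp only [Complex.I_sq]
  ring

lemma integral_fourier_eq_apply_zero {V E : Type*} [NormedAddCommGroup V]
    [InnerProductSpace ℝ V] [MeasurableSpace V] [BorelSpace V] [FiniteDimensional ℝ V]
    [NormedAddCommGroup E] [NormedSpace ℂ E] [CompleteSpace E] {f : V → E} (hf : Integrable f)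
    (hf' : Integrable (𝓕 f)) (h0 : ContinuousAt f 0) :
    ∫ w, 𝓕 f w = f 0 := by
  simpa [fourierInv_eq'] using hf.fourierInv_fourier_eq hf' h0

noncomputable def cosPulse : ℝ → ℂ :=
  (Set.Icc (-(1 / 2)) (1 / 2)).indicator fun t => Complex.cos (π * t)

lemma integrable_cosPulse : Integrable cosPulse :=
  (Continuous.integrableOn_Icc (by fun_prop)).integrable_indicator measurableSet_Icc

lemma continuousAt_cosPulse_zero : ContinuousAt cosPulse 0 := by
  refine ((by fun_prop : Continuous fun t : ℝ => Complex.cos (π * t)).continuousAt).congr ?_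
  filter_upwards [Icc_mem_nhds (by norm_num : (-(1 / 2) : ℝ) < 0)
    (by norm_num : (0 : ℝ) < 1 / 2)] with t ht
  rw [cosPulse, Set.indicator_of_mem ht]

lemma fourier_cosPulse_sub_half (α : ℝ) :
    𝓕 cosPulse (α - 1 / 2) = ((sinc (π * (1 - α)) + sinc (π * α)) / 2 : ℝ) := by
  have hint (b : ℝ) : IntervalIntegrable (fun t : ℝ => Complex.exp (2 * π * b * Complex.I * t))
      volume (-(1 / 2)) (1 / 2) :=
    (by fun_prop : Continuous _).intervalIntegrable _ _
  have hind : (fun t : ℝ => Complex.exp (↑(-2 * π * t * (α - 1 / 2)) * Complex.I) • cosPulse t)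
      = (Set.Icc (-(1 / 2) : ℝ) (1 / 2)).indicator fun t : ℝ =>
          (Complex.exp (2 * π * ↑(1 - α) * Complex.I * t)
            + Complex.exp (2 * π * ↑(-α) * Complex.I * t)) / 2 := by
    funext t
    simp only [smul_eq_mul, cosPulse, Set.indicator_apply]
    split_ifs
    · rw [Complex.cos, mul_div_assoc', mul_add, ← Complex.exp_add, ← Complex.exp_add]
      push_cast
      ring_nf
    · exact mul_zero _
  rw [Real.fourier_real_eq_integral_exp_smul, hind, integral_indicator measurableSet_Icc,
    integral_Icc_eq_integral_Ioc, ← intervalIntegral.integral_of_le (by norm_num),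
    intervalIntegral.integral_div, intervalIntegral.integral_add (hint _) (hint _),
    integral_exp_two_pi_mul_I_mul_eq_sinc, integral_exp_two_pi_mul_I_mul_eq_sinc, mul_neg,
    sinc_neg]
  push_cast
  rfl

lemma sinDivPoly_one_eq_sinc {α : ℝ} (h0 : α ≠ 0) (h1 : α ≠ 1) :
    sinDivPoly 1 α = π * (sinc (π * (1 - α)) + sinc (π * α)) := by
  have h1' : 1 - α ≠ 0 := sub_ne_zero.2 h1.symm
  rw [sinc_of_ne_zero (by positivity), sinc_of_ne_zero (by positivity), mul_one_sub, sin_pi_sub]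
  simp only [sinDivPoly, Icc_self, prod_singleton, Nat.cast_one]
  field_simp
  ring

lemma fourier_cosPulse_sub_half_ae_eq :
    (fun α => 𝓕 cosPulse (α - 1 / 2)) =ᵐ[volume]
      fun α => (((2 * π)⁻¹ * sinDivPoly 1 α : ℝ) : ℂ) := by
  filter_upwards [measure_eq_zero_iff_ae_notMem.1 ((Set.toFinite {0, 1}).measure_zero volume)]
    with α hα
  simp only [Set.mem_insert_iff, Set.mem_singleton_iff, not_or] at hα
  rw [fourier_cosPulse_sub_half, sinDivPoly_one_eq_sinc hα.1 hα.2]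
  field_simp

lemma integrable_fourier_cosPulse : Integrable (𝓕 cosPulse) := by
  have : Integrable fun α => 𝓕 cosPulse (α - 1 / 2) :=
    (integrable_sinDivPoly_one.const_mul _).ofReal.congr fourier_cosPulse_sub_half_ae_eq.symm
  simpa using this.comp_add_right (1 / 2)

lemma integral_sinDivPoly_one : ∫ α, sinDivPoly 1 α = 2 * π := by
  have h := integral_fourier_eq_apply_zero integrable_cosPulse integrable_fourier_cosPulse
    continuousAt_cosPulse_zero
  rw [← integral_sub_right_eq_self _ (1 / 2), integral_congr_ae fourier_cosPulse_sub_half_ae_eq,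
    integral_complex_ofReal, integral_const_mul, show cosPulse 0 = 1 by simp [cosPulse]] at h
  exact ((inv_mul_eq_one₀ (by positivity)).1 (by exact_mod_cast h)).symm

theorem integral_sin_div_poly (n : ℕ) (hn : 1 ≤ n) :
    ∫ α : ℝ, Real.sin (Real.pi * α) / (α * ∏ j ∈ Finset.Icc 1 n, ((j : ℝ) - α)) =
      Real.pi * 2 ^ n / (n.factorial : ℝ) := by
  change ∫ α, sinDivPoly n α = _
  induction n, hn using Nat.le_induction with
  | base => rw [integral_sinDivPoly_one]; norm_num [mul_comm]
  | succ n hn ih =>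
    rw [integral_sinDivPoly_succ (integrable_sinDivPoly hn), ih, Nat.factorial_succ]
    push_cast
    field_simp
    ring
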